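/- Let m, n ∈ ℕ with m ≥ 1, let A be an m × n integer matrix that is totally unimodular and has rank m, let c ∈ ℤⁿ, d, u ∈ ℝⁿ, b ∈ ℝᵐ, set d̄ = max_i |d_i|, and let G ∈ ℝ with G > 2·m·d̄. Consider the primal feasible set P = {x ∈ ℝⁿ | A x = b, 0 ≤ x ≤ u} and, for an objective vector w ∈ ℝⁿ, the dual feasible set D(w) = {(π, γ, λ) ∈ ℝᵐ × ℝⁿ × ℝⁿ | Aᵀπ + γ − λ = w, γ ≥ 0, λ ≥ 0} with dual objective bᵀπ + uᵀγ. Suppose x* is an extreme point of P maximizing (G·c + d)ᵀx over P, and (π*, γ*, λ*) is an extreme point of D(G·c + d) minimizing bᵀπ + uᵀγ over D(G·c + d). Then x* is an extreme point of P maximizing cᵀx over P, and the rounded vector π̄ defined by π̄_i = ⌊π*_i / G + 1/2⌋ for i = 1, …, m is the π-part of an extreme point of D(c) minimizing bᵀπ + uᵀγ over D(c), i.e., there exist γ̄, λ̄ such that (π̄, γ̄, λ̄) is a dual optimal extreme point for the linear program max {cᵀx | A x = b, 0 ≤ x ≤ u}. -/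

import Mathlib

/-!
Strong duality gives complementary slackness between `x*` and `y* = (π*, γ*, λ*)`, and
extremality of `y*` yields a basis: `m` linearly independent columns `B` of `A` on which both
slacks of `y*` vanish, so that `Bᵀ π* = G c_B + d_B`. Since `A` is totally unimodular,
`det B = ±1`, hence `π̄ := B⁻ᵀ c_B` is integral and `ε := π* - G π̄` solves `Bᵀ ε = d_B`.
Cramer's rule bounds `|εᵢ|` and `|aⱼᵀ ε|` by `m d̄ < G / 2`, so `π*ᵢ / G` rounds to `π̄ᵢ`, and
every nonzero reduced cost `cⱼ - aⱼᵀ π̄`, an integer, has the sign of `γ*ⱼ - λ*ⱼ`. The dual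
solution with prices `π̄` and slacks the positive and negative parts of these reduced costs
therefore satisfies complementary slackness with `x*`, which makes both optimal for `c`; it is
extreme because `B` determines its prices.
-/

open Matrix

/-- An integer matrix is totally unimodular if every square submatrix has determinant
`0`, `1`, or `-1`. -/
def IsTotallyUnimodularMat {m n : Type*} [Fintype m] [Fintype n]
    (A : Matrix m n ℤ) : Prop :=
  ∀ (k : ℕ) (f : Fin k → m) (g : Fin k → n),
    Function.Injective f → Function.Injective g →
      (A.submatrix f g).det = 0 ∨ (A.submatrix f g).det = 1 ∨ (A.submatrix f g).det = -1

/-- The primal feasible set `{x | A x = b, 0 ≤ x ≤ u}`. -/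
def primalSet {m n : ℕ} (A : Matrix (Fin m) (Fin n) ℝ) (b : Fin m → ℝ) (u : Fin n → ℝ) :
    Set (Fin n → ℝ) :=
  {x | A.mulVec x = b ∧ ∀ j, 0 ≤ x j ∧ x j ≤ u j}

/-- The dual feasible set `{(π, γ, λ) | Aᵀ π + γ − λ = w, γ ≥ 0, λ ≥ 0}`. -/
def dualSet {m n : ℕ} (A : Matrix (Fin m) (Fin n) ℝ) (w : Fin n → ℝ) :
    Set ((Fin m → ℝ) × (Fin n → ℝ) × (Fin n → ℝ)) :=
  {y | Aᵀ.mulVec y.1 + y.2.1 - y.2.2 = w ∧ (∀ j, 0 ≤ y.2.1 j) ∧ (∀ j, 0 ≤ y.2.2 j)}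

open Filter Topology

section Duality

variable {m n : ℕ} {A : Matrix (Fin m) (Fin n) ℝ} {b : Fin m → ℝ} {u w : Fin n → ℝ}
  {x : Fin n → ℝ} {y : (Fin m → ℝ) × (Fin n → ℝ) × (Fin n → ℝ)}

def dualOfPrices (A : Matrix (Fin m) (Fin n) ℝ) (w : Fin n → ℝ) (π : Fin m → ℝ) :
    (Fin m → ℝ) × (Fin n → ℝ) × (Fin n → ℝ) :=
  (π, (w - Aᵀ *ᵥ π)⁺, (w - Aᵀ *ᵥ π)⁻)

lemma dualOfPrices_mem_dualSet (π : Fin m → ℝ) : dualOfPrices A w π ∈ dualSet A w :=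
  ⟨by simp [dualOfPrices, add_sub_assoc, posPart_sub_negPart],
    fun _ => posPart_nonneg _, fun _ => negPart_nonneg _⟩

lemma duality_gap_eq_sum (hx : A *ᵥ x = b) (hy : Aᵀ *ᵥ y.1 + y.2.1 - y.2.2 = w) :
    b ⬝ᵥ y.1 + u ⬝ᵥ y.2.1 - w ⬝ᵥ x = ∑ j, (y.2.1 j * (u j - x j) + y.2.2 j * x j) := by
  subst hx hy
  rw [sub_dotProduct, add_dotProduct, mulVec_transpose, ← dotProduct_mulVec,
    dotProduct_comm _ (A *ᵥ x)]
  simp only [dotProduct, mul_sub, mul_comm (u _), Finset.sum_add_distrib, Finset.sum_sub_distrib]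
  ring

lemma duality_gap_terms_nonneg (hx : x ∈ primalSet A b u) (hy : y ∈ dualSet A w) (j : Fin n) :
    0 ≤ y.2.1 j * (u j - x j) ∧ 0 ≤ y.2.2 j * x j :=
  ⟨mul_nonneg (hy.2.1 j) (sub_nonneg.2 (hx.2 j).2), mul_nonneg (hy.2.2 j) (hx.2 j).1⟩

theorem weak_duality (hx : x ∈ primalSet A b u) (hy : y ∈ dualSet A w) :
    w ⬝ᵥ x ≤ b ⬝ᵥ y.1 + u ⬝ᵥ y.2.1 := by
  have hgap := duality_gap_eq_sum (u := u) hx.1 hy.1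
  have hnonneg : 0 ≤ ∑ j, (y.2.1 j * (u j - x j) + y.2.2 j * x j) := Finset.sum_nonneg fun j _ =>
    add_nonneg (duality_gap_terms_nonneg hx hy j).1 (duality_gap_terms_nonneg hx hy j).2
  linarith

theorem optimal_of_complementary_slackness (hx : x ∈ primalSet A b u) (hy : y ∈ dualSet A w)
    (hslack : ∀ j, (0 < y.2.1 j → x j = u j) ∧ (0 < y.2.2 j → x j = 0)) :
    (∀ x' ∈ primalSet A b u, w ⬝ᵥ x' ≤ w ⬝ᵥ x) ∧
      ∀ y' ∈ dualSet A w, b ⬝ᵥ y.1 + u ⬝ᵥ y.2.1 ≤ b ⬝ᵥ y'.1 + u ⬝ᵥ y'.2.1 := by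
  have hterm : ∀ j, y.2.1 j * (u j - x j) + y.2.2 j * x j = 0 := fun j => by
    have h1 : y.2.1 j * (u j - x j) = 0 := by
      rcases (hy.2.1 j).eq_or_lt with h | h
      · rw [← h, zero_mul]
      · rw [(hslack j).1 h, sub_self, mul_zero]
    have h2 : y.2.2 j * x j = 0 := by
      rcases (hy.2.2 j).eq_or_lt with h | h
      · rw [← h, zero_mul]
      · rw [(hslack j).2 h, mul_zero]
    rw [h1, h2, add_zero]
  have hgap := duality_gap_eq_sum (u := u) hx.1 hy.1
  simp only [hterm, Finset.sum_const_zero, sub_eq_zero] at hgap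
  exact ⟨fun x' hx' => hgap ▸ weak_duality hx' hy, fun y' hy' => hgap ▸ weak_duality hx hy'⟩

lemma exists_mem_box_dotProduct_eq (hu : ∀ j, 0 ≤ u j) (r : Fin n → ℝ) :
    ∃ x ∈ Set.univ.pi fun j => Set.Icc 0 (u j), r ⬝ᵥ x = u ⬝ᵥ r⁺ := by
  refine ⟨fun j => if 0 < r j then u j else 0, fun j _ => ?_, Finset.sum_congr rfl fun j _ => ?_⟩
  · dsimp only
    split_ifs <;> simp [hu j]
  · by_cases h : 0 < r j
    · simp [h, posPart_eq_self.2 h.le, mul_comm]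
    · simp [h, posPart_eq_zero.2 (not_lt.1 h)]

lemma exists_dotProduct_add_mul_eq (f : StrongDual ℝ ((Fin m → ℝ) × ℝ)) :
    ∃ (p : Fin m → ℝ) (α : ℝ), ∀ z r, f (z, r) = p ⬝ᵥ z + α * r := by
  refine ⟨fun i => f (Pi.single i 1, 0), f (0, 1), fun z r => ?_⟩
  have : (z, r) = ∑ i, z i • ((Pi.single i 1 : Fin m → ℝ), (0 : ℝ)) + r • (0, 1) := by
    ext <;> simp [Prod.fst_sum, Prod.snd_sum, Finset.sum_apply, Pi.single_apply]
  rw [this, map_add, map_sum]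
  simp only [map_smul, smul_eq_mul, dotProduct, mul_comm]

theorem exists_mem_dualSet_lt (hx : x ∈ primalSet A b u)
    (hopt : ∀ x' ∈ primalSet A b u, w ⬝ᵥ x' ≤ w ⬝ᵥ x) {t : ℝ} (ht : w ⬝ᵥ x < t) :
    ∃ y ∈ dualSet A w, b ⬝ᵥ y.1 + u ⬝ᵥ y.2.1 < t := by
  set box : Set (Fin n → ℝ) := Set.univ.pi fun j => Set.Icc 0 (u j)
  set L : (Fin n → ℝ) →ₗ[ℝ] (Fin m → ℝ) × ℝ := A.mulVecLin.prod (dotProductEquiv ℝ (Fin n) w)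
  have hL : ∀ x', L x' = (A *ᵥ x', w ⬝ᵥ x') := fun _ => rfl
  obtain ⟨f, β, hf, hβ⟩ := geometric_hahn_banach_closed_point
    ((convex_pi fun _ _ => convex_Icc _ _).linear_image L)
    ((isCompact_univ_pi fun _ => isCompact_Icc).image L.continuous_of_finiteDimensional).isClosed
    (x := (b, t)) (by
      rintro ⟨x', hx', hLx'⟩
      rw [hL, Prod.mk.injEq] at hLx'
      linarith [hopt x' ⟨hLx'.1, fun j => hx' j trivial⟩])
  obtain ⟨p, α, hpα⟩ := exists_dotProduct_add_mul_eq f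
  have hfx := hf _ ⟨x, fun j _ => hx.2 j, rfl⟩
  rw [hL, hpα, hx.1] at hfx
  rw [hpα] at hβ
  have hα : 0 < α := by nlinarith
  obtain ⟨x₀, hx₀, hval⟩ := exists_mem_box_dotProduct_eq (fun j => (hx.2 j).1.trans (hx.2 j).2)
    (w - Aᵀ *ᵥ (-α⁻¹ • p))
  refine ⟨dualOfPrices A w (-α⁻¹ • p), dualOfPrices_mem_dualSet _, ?_⟩
  have hfx₀ := hf _ ⟨x₀, hx₀, rfl⟩
  rw [hL, hpα] at hfx₀
  rw [dualOfPrices, ← hval, sub_dotProduct, mulVec_transpose, ← dotProduct_mulVec,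
    dotProduct_comm b]
  simp only [neg_smul, neg_dotProduct, smul_dotProduct, smul_eq_mul]
  have key : α⁻¹ * (p ⬝ᵥ A *ᵥ x₀ - p ⬝ᵥ b) < t - w ⬝ᵥ x₀ := by
    rw [inv_mul_lt_iff₀ hα]; linarith
  linarith

theorem complementary_slackness (hx : x ∈ primalSet A b u) (hy : y ∈ dualSet A w)
    (hxopt : ∀ x' ∈ primalSet A b u, w ⬝ᵥ x' ≤ w ⬝ᵥ x)
    (hyopt : ∀ y' ∈ dualSet A w, b ⬝ᵥ y.1 + u ⬝ᵥ y.2.1 ≤ b ⬝ᵥ y'.1 + u ⬝ᵥ y'.2.1) (j : Fin n) :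
    (0 < y.2.1 j → x j = u j) ∧ (0 < y.2.2 j → x j = 0) := by
  have hgap : b ⬝ᵥ y.1 + u ⬝ᵥ y.2.1 - w ⬝ᵥ x = 0 := by
    refine le_antisymm ?_ (sub_nonneg.2 (weak_duality hx hy))
    refine sub_nonpos.2 (le_of_forall_gt_imp_ge_of_dense fun t ht => ?_)
    obtain ⟨y', hy', hlt⟩ := exists_mem_dualSet_lt hx hxopt ht
    exact (hyopt y' hy').trans hlt.le
  have hnonneg := duality_gap_terms_nonneg hx hy
  rw [duality_gap_eq_sum hx.1 hy.1,
    Finset.sum_eq_zero_iff_of_nonneg fun j _ => add_nonneg (hnonneg j).1 (hnonneg j).2] at hgap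
  obtain ⟨h1, h2⟩ :=
    (add_eq_zero_iff_of_nonneg (hnonneg j).1 (hnonneg j).2).1 (hgap j (Finset.mem_univ j))
  exact ⟨fun h => (sub_eq_zero.1 ((mul_eq_zero.1 h1).resolve_left h.ne')).symm,
    fun h => (mul_eq_zero.1 h2).resolve_left h.ne'⟩

end Duality

section ExtremePoints

lemma eq_zero_of_eventually_add_smul_mem {E : Type*} [AddCommGroup E] [Module ℝ E] {S : Set E}
    {y v : E} (hy : y ∈ S.extremePoints ℝ) (h : ∀ᶠ t in 𝓝 (0 : ℝ), y + t • v ∈ S) : v = 0 := by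
  have hneg : ∀ᶠ t in 𝓝 (0 : ℝ), y + (-t) • v ∈ S :=
    (continuous_neg.tendsto' (0 : ℝ) 0 neg_zero).eventually h
  obtain ⟨t, ht, h₁, h₂⟩ :=
    (eventually_mem_nhdsWithin.and (nhdsWithin_le_nhds (h.and hneg))).exists
      (f := 𝓝[>] (0 : ℝ))
  have := hy.2 h₁ h₂ ⟨1 / 2, 1 / 2, by norm_num, by norm_num, by norm_num, by module⟩
  simpa [(Set.mem_Ioi.1 ht).ne'] using this

lemma eventually_nonneg_add_mul {a c : ℝ} (ha : 0 ≤ a) (hc : a = 0 → c = 0) :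
    ∀ᶠ t in 𝓝 (0 : ℝ), 0 ≤ a + t * c := by
  rcases ha.eq_or_lt with rfl | ha
  · simp [hc rfl]
  · have hcont : Continuous fun t : ℝ => a + t * c := by fun_prop
    exact ((hcont.tendsto' 0 a (by simp)).eventually_const_lt ha).mono fun _ => le_of_lt

variable {m n : ℕ} {A : Matrix (Fin m) (Fin n) ℝ} {w : Fin n → ℝ}
  {y : (Fin m → ℝ) × (Fin n → ℝ) × (Fin n → ℝ)}

lemma eventually_add_smul_mem_dualSet (hy : y ∈ dualSet A w)
    {v : (Fin m → ℝ) × (Fin n → ℝ) × (Fin n → ℝ)} (hv : Aᵀ *ᵥ v.1 + v.2.1 - v.2.2 = 0)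
    (hγ : ∀ j, y.2.1 j = 0 → v.2.1 j = 0) (hlam : ∀ j, y.2.2 j = 0 → v.2.2 j = 0) :
    ∀ᶠ t in 𝓝 (0 : ℝ), y + t • v ∈ dualSet A w := by
  filter_upwards [eventually_all.2 fun j => eventually_nonneg_add_mul (hy.2.1 j) (hγ j),
    eventually_all.2 fun j => eventually_nonneg_add_mul (hy.2.2 j) (hlam j)] with t h₁ h₂
  refine ⟨?_, h₁, h₂⟩
  calc Aᵀ *ᵥ (y + t • v).1 + (y + t • v).2.1 - (y + t • v).2.2
      = (Aᵀ *ᵥ y.1 + y.2.1 - y.2.2) + t • (Aᵀ *ᵥ v.1 + v.2.1 - v.2.2) := by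
        simp only [Prod.fst_add, Prod.snd_add, Prod.smul_fst, Prod.smul_snd, mulVec_add,
          mulVec_smul]
        module
    _ = w := by rw [hy.1, hv, smul_zero, add_zero]

lemma eq_zero_of_mem_extremePoints_dualSet (hy : y ∈ (dualSet A w).extremePoints ℝ)
    {δ : Fin m → ℝ} (hδ : ∀ j, y.2.1 j = 0 → y.2.2 j = 0 → (Aᵀ *ᵥ δ) j = 0) : δ = 0 := by
  classical
  -- shift prices by `δ`, absorbing the change of reduced costs in a slack that is positive
  let v : (Fin m → ℝ) × (Fin n → ℝ) × (Fin n → ℝ) :=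
    (δ, fun j => if y.2.1 j = 0 then 0 else -(Aᵀ *ᵥ δ) j,
      fun j => if y.2.1 j = 0 then (Aᵀ *ᵥ δ) j else 0)
  have hv : Aᵀ *ᵥ v.1 + v.2.1 - v.2.2 = 0 := by
    ext j
    by_cases h : y.2.1 j = 0 <;> simp [v, h]
  have hlam : ∀ j, y.2.2 j = 0 → v.2.2 j = 0 := fun j h => by
    by_cases h' : y.2.1 j = 0
    · simp [v, h', hδ j h' h]
    · simp [v, h']
  exact congrArg Prod.fst (eq_zero_of_eventually_add_smul_mem hy
    (eventually_add_smul_mem_dualSet hy.1 hv (fun j h => by simp [v, h]) hlam))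

lemma exists_det_ne_zero_of_forall_ne_zero {ι : Type*} (v : ι → Fin m → ℝ)
    (hv : ∀ δ ≠ 0, ∃ i, v i ⬝ᵥ δ ≠ 0) : ∃ g : Fin m → ι, (Matrix.of fun k => v (g k)).det ≠ 0 := by
  have hspan : Submodule.span ℝ (Set.range v) = ⊤ := by
    by_contra hne
    obtain ⟨f, hf, hmap⟩ :=
      Submodule.exists_dual_map_eq_bot_of_lt_top (lt_top_iff_ne_top.2 hne) inferInstance
    obtain ⟨i, hi⟩ := hv ((dotProductEquiv ℝ (Fin m)).symm f) (by simpa using hf)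
    refine hi ?_
    rw [dotProduct_comm, ← dotProductEquiv_apply_apply, LinearEquiv.apply_symm_apply]
    have : f (v i) ∈ Submodule.map f (Submodule.span ℝ (Set.range v)) :=
      Submodule.mem_map_of_mem (Submodule.subset_span ⟨i, rfl⟩)
    rwa [hmap, Submodule.mem_bot] at this
  obtain ⟨κ, a, -, hspan', hli⟩ := exists_linearIndependent' ℝ v
  let e := (Module.Basis.mk hli (by rw [hspan', hspan])).indexEquiv (Pi.basisFun ℝ (Fin m))
  refine ⟨a ∘ e.symm, ?_⟩
  have : LinearIndependent ℝ fun k => v (a (e.symm k)) := hli.comp e.symm e.symm.injective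
  exact ((isUnit_iff_isUnit_det _).1 (linearIndependent_rows_iff_isUnit.1 this)).ne_zero

theorem exists_basis_of_mem_extremePoints_dualSet (hy : y ∈ (dualSet A w).extremePoints ℝ) :
    ∃ g : Fin m → Fin n, (∀ i, y.2.1 (g i) = 0 ∧ y.2.2 (g i) = 0) ∧ (A.submatrix id g).det ≠ 0 := by
  obtain ⟨g, hg⟩ := exists_det_ne_zero_of_forall_ne_zero
    (fun j : {j // y.2.1 j = 0 ∧ y.2.2 j = 0} => fun i => A i j) fun δ hδ => by
      by_contra! h
      exact hδ (eq_zero_of_mem_extremePoints_dualSet hy fun j h₁ h₂ => h ⟨j, h₁, h₂⟩)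
  refine ⟨fun i => g i, fun i => (g i).2, ?_⟩
  rwa [← det_transpose]

theorem dualOfPrices_mem_extremePoints {π : Fin m → ℝ} {g : Fin m → Fin n}
    (hg : (A.submatrix id g).det ≠ 0) (htight : ∀ i, (w - Aᵀ *ᵥ π) (g i) = 0) :
    dualOfPrices A w π ∈ (dualSet A w).extremePoints ℝ := by
  refine ⟨dualOfPrices_mem_dualSet π, ?_⟩
  rintro y₁ hy₁ y₂ hy₂ ⟨a, c, ha, hc, -, hsum⟩
  set r := w - Aᵀ *ᵥ π
  have hzero {p q : ℝ} (hp : 0 ≤ p) (hq : 0 ≤ q) (h : a * p + c * q = 0) : p = 0 :=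
    (mul_eq_zero.1 ((add_eq_zero_iff_of_nonneg (mul_nonneg ha.le hp)
      (mul_nonneg hc.le hq)).1 h).1).resolve_left ha.ne'
  have hγ : ∀ j, r j ≤ 0 → y₁.2.1 j = 0 := fun j hj => hzero (hy₁.2.1 j) (hy₂.2.1 j)
    ((congrArg (fun z => z.2.1 j) hsum).trans (posPart_eq_zero.2 hj))
  have hlam : ∀ j, 0 ≤ r j → y₁.2.2 j = 0 := fun j hj => hzero (hy₁.2.2 j) (hy₂.2.2 j)
    ((congrArg (fun z => z.2.2 j) hsum).trans (negPart_eq_zero.2 hj))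
  have hπ : y₁.1 = π := by
    have hB : IsUnit (A.submatrix id g)ᵀ := (isUnit_iff_isUnit_det _).2 (by
      rw [det_transpose]; exact hg.isUnit)
    refine mulVec_injective_iff_isUnit.2 hB (funext fun i => ?_)
    have h₁ := congrFun hy₁.1 (g i)
    have h₂ : w (g i) - (Aᵀ *ᵥ π) (g i) = 0 := htight i
    simp only [Pi.add_apply, Pi.sub_apply, hγ _ (htight i).le, hlam _ (htight i).ge] at h₁
    change (Aᵀ *ᵥ y₁.1) (g i) = (Aᵀ *ᵥ π) (g i)
    linarith
  have hr : ∀ j, y₁.2.1 j - y₁.2.2 j = r j := fun j => by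
    have := congrFun hy₁.1 j
    rw [hπ] at this
    simp only [Pi.add_apply, Pi.sub_apply, r] at this ⊢
    linarith
  refine Prod.ext hπ (Prod.ext (funext fun j => ?_) (funext fun j => ?_))
  · change y₁.2.1 j = (r j)⁺
    rcases le_total (r j) 0 with h | h
    · rw [hγ j h, posPart_eq_zero.2 h]
    · rw [posPart_eq_self.2 h]; linarith [hr j, hlam j h]
  · change y₁.2.2 j = (r j)⁻
    rcases le_total (r j) 0 with h | h
    · rw [negPart_eq_neg.2 h]; linarith [hr j, hγ j h]
    · rw [hlam j h, negPart_eq_zero.2 h]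

end ExtremePoints

section TotallyUnimodular

lemma IsTotallyUnimodularMat.isTotallyUnimodular {ι κ : Type*} [Fintype ι] [Fintype κ]
    {A : Matrix ι κ ℤ} (hA : IsTotallyUnimodularMat A) : A.IsTotallyUnimodular :=
  fun k f g hf hg => by
    rcases hA k f g hf hg with h | h | h
    exacts [⟨0, by simp [h]⟩, ⟨1, by simp [h]⟩, ⟨-1, by simp [h]⟩]

namespace Matrix.IsTotallyUnimodular

variable {ι κ : Type*}

lemma map {R S : Type*} [CommRing R] [CommRing S] {A : Matrix ι κ R}
    (hA : A.IsTotallyUnimodular) (f : R →+* S) : (A.map f).IsTotallyUnimodular :=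
  fun k r c hr hc => by
    obtain ⟨s, hs⟩ := hA k r c hr hc
    exact ⟨s, by rw [submatrix_map, ← RingHom.mapMatrix_apply, ← RingHom.map_det, ← hs,
      SignType.map_cast]⟩

variable {R : Type*} [CommRing R] [LinearOrder R] [IsStrictOrderedRing R]

lemma abs_det_submatrix_le_one {A : Matrix ι κ R} (hA : A.IsTotallyUnimodular) {k : ℕ}
    (f : Fin k → ι) (g : Fin k → κ) : |(A.submatrix f g).det| ≤ 1 := by
  obtain ⟨s, hs⟩ := (isTotallyUnimodular_iff A).1 hA k f g
  rw [← hs]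
  cases s <;> simp

lemma abs_det_submatrix_eq_one {A : Matrix ι κ R} (hA : A.IsTotallyUnimodular) {k : ℕ}
    {f : Fin k → ι} {g : Fin k → κ} (h : (A.submatrix f g).det ≠ 0) :
    |(A.submatrix f g).det| = 1 := by
  obtain ⟨s, hs⟩ := (isTotallyUnimodular_iff A).1 hA k f g
  rw [← hs] at h ⊢
  cases s <;> simp at h ⊢

variable {m : ℕ}

theorem abs_transpose_mulVec_le {M : Matrix (Fin m) κ ℝ} (hM : M.IsTotallyUnimodular)
    {g : Fin m → κ} (hg : (M.submatrix id g).det ≠ 0) (ε : Fin m → ℝ) (j : κ) :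
    |(Mᵀ *ᵥ ε) j| ≤ ∑ k, |(Mᵀ *ᵥ ε) (g k)| := by
  set B := M.submatrix id g
  set z := B.cramer fun i => M i j
  -- by Cramer's rule, the coordinates of column `j` in the basis `g` are minors of `M`
  have hz : ∀ k, |z k| ≤ 1 := fun k => by
    have : B.updateCol k (fun i => M i j) = M.submatrix id (Function.update g k j) := by
      ext a b
      by_cases h : b = k <;> simp [B, h]
    rw [show z k = (B.updateCol k fun i => M i j).det from cramer_apply _ _ _, this]
    exact hM.abs_det_submatrix_le_one _ _
  have hdet : B.det * (Mᵀ *ᵥ ε) j = ∑ k, z k * (Mᵀ *ᵥ ε) (g k) :=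
    calc B.det * (Mᵀ *ᵥ ε) j = (B.det • fun i => M i j) ⬝ᵥ ε := by
          rw [smul_dotProduct]; rfl
      _ = (B *ᵥ z) ⬝ᵥ ε := by rw [mulVec_cramer]
      _ = z ⬝ᵥ (Bᵀ *ᵥ ε) := by
          rw [dotProduct_comm, dotProduct_mulVec, ← mulVec_transpose, dotProduct_comm]
  calc |(Mᵀ *ᵥ ε) j| = |B.det * (Mᵀ *ᵥ ε) j| := by
        rw [abs_mul, hM.abs_det_submatrix_eq_one hg, one_mul]
    _ ≤ ∑ k, |z k * (Mᵀ *ᵥ ε) (g k)| := hdet ▸ Finset.abs_sum_le_sum_abs _ _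
    _ ≤ ∑ k, |(Mᵀ *ᵥ ε) (g k)| := Finset.sum_le_sum fun k _ => by
          rw [abs_mul]; exact mul_le_of_le_one_left (abs_nonneg _) (hz k)

theorem abs_le_and_abs_transpose_mulVec_le {n : ℕ} {A : Matrix (Fin m) (Fin n) ℝ}
    (hA : A.IsTotallyUnimodular) {g : Fin m → Fin n} (hg : (A.submatrix id g).det ≠ 0)
    (ε : Fin m → ℝ) :
    (∀ i, |ε i| ≤ ∑ k, |(Aᵀ *ᵥ ε) (g k)|) ∧ ∀ j, |(Aᵀ *ᵥ ε) j| ≤ ∑ k, |(Aᵀ *ᵥ ε) (g k)| := by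
  -- adjoining the identity makes the coordinates of `ε` entries of `Mᵀ *ᵥ ε` as well
  have hM := (fromCols_one_isTotallyUnimodular_iff A).2 hA
  have hsub : (fromCols A (1 : Matrix (Fin m) (Fin m) ℝ)).submatrix id (Sum.inl ∘ g) =
      A.submatrix id g := by
    ext; simp
  have key := hM.abs_transpose_mulVec_le (g := Sum.inl ∘ g) (hsub ▸ hg) ε
  simp only [transpose_fromCols, fromRows_mulVec, transpose_one, one_mulVec, Function.comp_apply,
    Sum.elim_inl] at key
  exact ⟨fun i => key (Sum.inr i), fun j => key (Sum.inl j)⟩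

end Matrix.IsTotallyUnimodular

end TotallyUnimodular

lemma Int.floor_div_add_half_eq {x G : ℝ} {k : ℤ} (hG : 0 < G) (h : |x - G * k| < G / 2) :
    ⌊x / G + 1 / 2⌋ = k := by
  obtain ⟨h₁, h₂⟩ := abs_sub_lt_iff.1 h
  have h₃ : k - 1 / 2 ≤ x / G := by rw [le_div_iff₀ hG]; linarith
  have h₄ : x / G < k + 1 / 2 := by rw [div_lt_iff₀ hG]; linarith
  rw [Int.floor_eq_iff]
  constructor <;> linarith

section Rounding

variable {m n : ℕ} {A : Matrix (Fin m) (Fin n) ℤ} {g : Fin m → Fin n} {c : Fin n → ℤ}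
  {d : Fin n → ℝ} {G : ℝ} {p : Fin m → ℤ} {y : (Fin m → ℝ) × (Fin n → ℝ) × (Fin n → ℝ)}

local notation "Aℝ" => A.map (fun z : ℤ => (z : ℝ))

theorem exists_int_prices (hA : A.IsTotallyUnimodular) (hg : ((Aℝ).submatrix id g).det ≠ 0) :
    ∃ p : Fin m → ℤ, ∀ i, (Aℝᵀ *ᵥ fun i => (p i : ℝ)) (g i) = c (g i) := by
  have hdet : ((A.submatrix id g).det : ℝ) = ((Aℝ).submatrix id g).det := by
    rw [submatrix_map]
    exact (Int.castRingHom ℝ).map_det _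
  have hunit : IsUnit (A.submatrix id g)ᵀ.det := by
    rw [det_transpose, Int.isUnit_iff_abs_eq]
    exact hA.abs_det_submatrix_eq_one fun h => hg (by rw [← hdet, h, Int.cast_zero])
  refine ⟨(A.submatrix id g)ᵀ⁻¹ *ᵥ (c ∘ g), fun i => ?_⟩
  have : (A.submatrix id g)ᵀ *ᵥ ((A.submatrix id g)ᵀ⁻¹ *ᵥ (c ∘ g)) = c ∘ g := by
    rw [mulVec_mulVec, mul_nonsing_inv _ hunit, one_mulVec]
  simpa [mulVec, dotProduct] using congrArg (fun v : Fin m → ℤ => (v i : ℝ)) this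

theorem abs_dual_sub_mul_prices_le (hA : (Aℝ).IsTotallyUnimodular)
    (hg : ((Aℝ).submatrix id g).det ≠ 0)
    (hp : ∀ i, (Aℝᵀ *ᵥ fun i => (p i : ℝ)) (g i) = c (g i))
    (hy : y ∈ dualSet Aℝ fun j => G * c j + d j)
    (htight : ∀ i, y.2.1 (g i) = 0 ∧ y.2.2 (g i) = 0) :
    (∀ i, |y.1 i - G * p i| ≤ ∑ k, |d (g k)|) ∧
      ∀ j, |y.2.1 j - y.2.2 j - G * (c j - (Aℝᵀ *ᵥ fun i => (p i : ℝ)) j)|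
        ≤ |d j| + ∑ k, |d (g k)| := by
  set ε := y.1 - G • fun i => (p i : ℝ)
  have hcol : ∀ j, (Aℝᵀ *ᵥ ε) j
      = d j - (y.2.1 j - y.2.2 j - G * (c j - (Aℝᵀ *ᵥ fun i => (p i : ℝ)) j)) := fun j => by
    have := congrFun hy.1 j
    simp only [Pi.add_apply, Pi.sub_apply] at this
    simp only [ε, mulVec_sub, mulVec_smul, Pi.sub_apply, Pi.smul_apply, smul_eq_mul]
    linarith
  have hbasis : ∀ k, (Aℝᵀ *ᵥ ε) (g k) = d (g k) := fun k => by
    rw [hcol, (htight k).1, (htight k).2, hp k]; ring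
  obtain ⟨h₁, h₂⟩ := hA.abs_le_and_abs_transpose_mulVec_le hg ε
  simp only [hbasis] at h₁ h₂
  refine ⟨fun i => ?_, fun j => ?_⟩
  · simpa [ε] using h₁ i
  · have := h₂ j
    rw [hcol] at this
    set r := y.2.1 j - y.2.2 j - G * (c j - (Aℝᵀ *ᵥ fun i => (p i : ℝ)) j)
    linarith [abs_sub_abs_le_abs_sub r (d j), abs_sub_comm r (d j)]

theorem round_prices_eq_and_pos_slacks (hm : 1 ≤ m) (hA : (Aℝ).IsTotallyUnimodular)
    (hg : ((Aℝ).submatrix id g).det ≠ 0)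
    (hp : ∀ i, (Aℝᵀ *ᵥ fun i => (p i : ℝ)) (g i) = c (g i))
    (hy : y ∈ dualSet Aℝ fun j => G * c j + d j)
    (htight : ∀ i, y.2.1 (g i) = 0 ∧ y.2.2 (g i) = 0) {dbar : ℝ} (hd : ∀ j, |d j| ≤ dbar)
    (hG : 2 * (m : ℝ) * dbar < G) :
    (∀ i, ⌊y.1 i / G + 1 / 2⌋ = p i) ∧ ∀ j,
      (0 < (dualOfPrices Aℝ (fun j => c j) fun i => p i).2.1 j →
        0 < y.2.1 j) ∧
      (0 < (dualOfPrices Aℝ (fun j => c j) fun i => p i).2.2 j →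
        0 < y.2.2 j) := by
  obtain ⟨h₁, h₂⟩ := abs_dual_sub_mul_prices_le hA hg hp hy htight
  have hsum : ∑ k, |d (g k)| ≤ m * dbar :=
    (Finset.sum_le_sum fun k _ => hd (g k)).trans (by simp)
  have hdbar : 0 ≤ dbar := (abs_nonneg _).trans (hd (g ⟨0, hm⟩))
  have hm' : (1 : ℝ) ≤ m := by exact_mod_cast hm
  refine ⟨fun i => Int.floor_div_add_half_eq (by nlinarith) ((h₁ i).trans_lt (by nlinarith)),
    fun j => ?_⟩
  obtain ⟨r, hr⟩ : ∃ r : ℤ, (c j : ℝ) - (Aℝᵀ *ᵥ fun i => (p i : ℝ)) j = r :=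
    ⟨c j - (Aᵀ *ᵥ p) j, by simp [mulVec, dotProduct]⟩
  have hj := abs_lt.1 ((h₂ j).trans_lt (show |d j| + ∑ k, |d (g k)| < G by nlinarith [hd j]))
  simp only [dualOfPrices, Pi.posPart_apply, Pi.negPart_apply, Pi.sub_apply, hr, posPart_pos_iff,
    negPart_pos_iff, Int.cast_pos, Int.cast_lt_zero] at hj ⊢
  constructor
  · intro h
    have : G ≤ G * r := le_mul_of_one_le_right (by nlinarith) (by exact_mod_cast h)
    linarith [hy.2.2 j]
  · intro h
    have : G * r ≤ -G := by
      rw [← mul_neg_one]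
      exact mul_le_mul_of_nonneg_left (by exact_mod_cast Int.le_sub_one_of_lt h) (by nlinarith)
    linarith [hy.2.1 j]

end Rounding

theorem price_rounding_general
    (m n : ℕ) (hm : 1 ≤ m)
    (A : Matrix (Fin m) (Fin n) ℤ)
    (hTU : IsTotallyUnimodularMat A)
    (c : Fin n → ℤ) (d u : Fin n → ℝ) (b : Fin m → ℝ)
    (dbar : ℝ) (hdbar : IsGreatest (Set.range fun j => |d j|) dbar)
    (G : ℝ) (hG : 2 * (m : ℝ) * dbar < G)
    (xstar : Fin n → ℝ)
    (hx_ep : xstar ∈ Set.extremePoints ℝ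
        (primalSet (A.map (fun z : ℤ => (z : ℝ))) b u))
    (hx_opt : ∀ x ∈ primalSet (A.map (fun z : ℤ => (z : ℝ))) b u,
        ∑ j, (G * (c j : ℝ) + d j) * x j ≤ ∑ j, (G * (c j : ℝ) + d j) * xstar j)
    (ystar : (Fin m → ℝ) × (Fin n → ℝ) × (Fin n → ℝ))
    (hy_ep : ystar ∈ Set.extremePoints ℝ
        (dualSet (A.map (fun z : ℤ => (z : ℝ))) (fun j => G * (c j : ℝ) + d j)))
    (hy_opt : ∀ y ∈ dualSet (A.map (fun z : ℤ => (z : ℝ))) (fun j => G * (c j : ℝ) + d j),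
        (∑ i, b i * ystar.1 i) + ∑ j, u j * ystar.2.1 j
          ≤ (∑ i, b i * y.1 i) + ∑ j, u j * y.2.1 j) :
    (xstar ∈ Set.extremePoints ℝ (primalSet (A.map (fun z : ℤ => (z : ℝ))) b u) ∧
      ∀ x ∈ primalSet (A.map (fun z : ℤ => (z : ℝ))) b u,
        ∑ j, (c j : ℝ) * x j ≤ ∑ j, (c j : ℝ) * xstar j) ∧
    (∃ γ lam : Fin n → ℝ,
      ((fun i => ((⌊ystar.1 i / G + 1 / 2⌋ : ℤ) : ℝ)), γ, lam) ∈
        Set.extremePoints ℝ (dualSet (A.map (fun z : ℤ => (z : ℝ))) (fun j => (c j : ℝ))) ∧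
      ∀ y ∈ dualSet (A.map (fun z : ℤ => (z : ℝ))) (fun j => (c j : ℝ)),
        (∑ i, b i * ((⌊ystar.1 i / G + 1 / 2⌋ : ℤ) : ℝ)) + ∑ j, u j * γ j
          ≤ (∑ i, b i * y.1 i) + ∑ j, u j * y.2.1 j) := by
  have hA : (A.map (fun z : ℤ => (z : ℝ))).IsTotallyUnimodular :=
    hTU.isTotallyUnimodular.map (Int.castRingHom ℝ)
  obtain ⟨g, hg_tight, hg⟩ := exists_basis_of_mem_extremePoints_dualSet hy_ep
  obtain ⟨p, hp⟩ := exists_int_prices (c := c) hTU.isTotallyUnimodular hg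
  obtain ⟨hround, hsupport⟩ :=
    round_prices_eq_and_pos_slacks hm hA hg hp hy_ep.1 hg_tight (fun j => hdbar.2 ⟨j, rfl⟩) hG
  have hslack := complementary_slackness hx_ep.1 hy_ep.1 hx_opt hy_opt
  set ybar := dualOfPrices (A.map (fun z : ℤ => (z : ℝ))) (fun j => (c j : ℝ)) fun i => (p i : ℝ)
  obtain ⟨hx_opt', hybar_opt⟩ := optimal_of_complementary_slackness hx_ep.1
    (dualOfPrices_mem_dualSet _) fun j =>
      ⟨fun h => (hslack j).1 ((hsupport j).1 h), fun h => (hslack j).2 ((hsupport j).2 h)⟩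
  refine ⟨⟨hx_ep, hx_opt'⟩, ybar.2.1, ybar.2.2, ?_, ?_⟩ <;> simp only [hround]
  · exact dualOfPrices_mem_extremePoints hg fun i => sub_eq_zero.2 (hp i).symm
  · exact hybar_opt

/-- Price rounding. If `A` is totally unimodular of rank `m ≥ 1`,
`G > 2·m·d̄`, `x*` is a primal optimal extreme point and `(π*, γ*, λ*)` a dual optimal
extreme point of the weighted program `max (G·c + d)ᵀx`, then `x*` is a primal optimal
extreme point of `max cᵀx`, and the rounded prices `π̄ᵢ = ⌊π*ᵢ/G + 1/2⌋` form the π-part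
of a dual optimal extreme point of `max cᵀx`. -/
theorem price_rounding
    (m n : ℕ) (hm : 1 ≤ m)
    (A : Matrix (Fin m) (Fin n) ℤ)
    (hTU : IsTotallyUnimodularMat A)
    (hrank : (A.map (fun z : ℤ => (z : ℝ))).rank = m)
    (c : Fin n → ℤ) (d u : Fin n → ℝ) (b : Fin m → ℝ)
    (dbar : ℝ) (hdbar : IsGreatest (Set.range fun j => |d j|) dbar)
    (G : ℝ) (hG : 2 * (m : ℝ) * dbar < G)
    (xstar : Fin n → ℝ)
    (hx_ep : xstar ∈ Set.extremePoints ℝ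
        (primalSet (A.map (fun z : ℤ => (z : ℝ))) b u))
    (hx_opt : ∀ x ∈ primalSet (A.map (fun z : ℤ => (z : ℝ))) b u,
        ∑ j, (G * (c j : ℝ) + d j) * x j ≤ ∑ j, (G * (c j : ℝ) + d j) * xstar j)
    (ystar : (Fin m → ℝ) × (Fin n → ℝ) × (Fin n → ℝ))
    (hy_ep : ystar ∈ Set.extremePoints ℝ
        (dualSet (A.map (fun z : ℤ => (z : ℝ))) (fun j => G * (c j : ℝ) + d j)))
    (hy_opt : ∀ y ∈ dualSet (A.map (fun z : ℤ => (z : ℝ))) (fun j => G * (c j : ℝ) + d j),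
        (∑ i, b i * ystar.1 i) + ∑ j, u j * ystar.2.1 j
          ≤ (∑ i, b i * y.1 i) + ∑ j, u j * y.2.1 j) :
    (xstar ∈ Set.extremePoints ℝ (primalSet (A.map (fun z : ℤ => (z : ℝ))) b u) ∧
      ∀ x ∈ primalSet (A.map (fun z : ℤ => (z : ℝ))) b u,
        ∑ j, (c j : ℝ) * x j ≤ ∑ j, (c j : ℝ) * xstar j) ∧
    (∃ γ lam : Fin n → ℝ,
      ((fun i => ((⌊ystar.1 i / G + 1 / 2⌋ : ℤ) : ℝ)), γ, lam) ∈
        Set.extremePoints ℝ (dualSet (A.map (fun z : ℤ => (z : ℝ))) (fun j => (c j : ℝ))) ∧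
      ∀ y ∈ dualSet (A.map (fun z : ℤ => (z : ℝ))) (fun j => (c j : ℝ)),
        (∑ i, b i * ((⌊ystar.1 i / G + 1 / 2⌋ : ℤ) : ℝ)) + ∑ j, u j * γ j
          ≤ (∑ i, b i * y.1 i) + ∑ j, u j * y.2.1 j) :=
  price_rounding_general m n hm A hTU c d u b dbar hdbar G hG xstar hx_ep hx_opt ystar hy_ep hy_opt
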